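/- arXiv:2501.03109 — 4 statements merged into one kernel-verified Lean document; each statement's English description precedes it below -/
import Mathlib

section
/- Let d ≥ 1, N ≥ 1, and let Γ, Ω be nonempty finite types. Let p : Fin N → Fin N → Γ → ((ZMod d) × (ZMod d) × Ω → ℝ) be a family of probability distributions (nonnegative, summing to 1 for each triple of settings (a,b,c)). Assume the non-signaling conditions: (i) the (X,Y)-marginal of p(a,b,c) does not depend on c; (ii) the (X,Z)-marginal of p(a,b,c) does not depend on b; (iii) the (Y,Z)-marginal of p(a,b,c) does not depend on a. Then for every a ∈ Fin N, every c ∈ Γ, every x ∈ ZMod d: (1/d)·Σ_{z ∈ Ω} |P_{XZ}(x,z|a,c) − (1/d)·P_Z(z|c)| ≤ (d/4)·I_N, where P_{XZ}(·|a,c) is the (X,Z)-marginal (independent of b by (ii)), P_Z(·|c) is the Z-marginal (independent of a and b), and I_N is the chained correlation quantity of the (X,Y)-marginals. -/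
open Finset

/-- `E[val(X − Y)]` for a joint distribution `π` on `(ZMod d) × (ZMod d)`. -/
noncomputable def expValXsubY {d : ℕ} [NeZero d] (π : ZMod d × ZMod d → ℝ) : ℝ :=
  ∑ w : ZMod d × ZMod d, ((w.1 - w.2).val : ℝ) * π w

/-- `E[val(Y − X)]` for a joint distribution `π` on `(ZMod d) × (ZMod d)`. -/
noncomputable def expValYsubX {d : ℕ} [NeZero d] (π : ZMod d × ZMod d → ℝ) : ℝ :=
  ∑ w : ZMod d × ZMod d, ((w.2 - w.1).val : ℝ) * π w

/-- `E[val(Y − X − 1)]` for a joint distribution `π` on `(ZMod d) × (ZMod d)`. -/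
noncomputable def expValYsubXsubOne {d : ℕ} [NeZero d] (π : ZMod d × ZMod d → ℝ) : ℝ :=
  ∑ w : ZMod d × ZMod d, ((w.2 - w.1 - 1).val : ℝ) * π w

/-- The chained correlation quantity
`I_N := Σ_{i=1}^{N−1} ( E_{Q(i,i)}[val(X−Y)] + E_{Q(i+1,i)}[val(Y−X)] )
      + E_{Q(N,N)}[val(X−Y)] + E_{Q(1,N)}[val(Y−X−1)]`,
for a family `Q` of joint distributions on `(ZMod d) × (ZMod d)` indexed by settings
`a, b ∈ {1, …, N}` (represented by `Fin N`). -/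
noncomputable def chainedIN (d N : ℕ) [NeZero d] (hN : 0 < N)
    (Q : Fin N → Fin N → (ZMod d × ZMod d → ℝ)) : ℝ :=
  (∑ i ∈ (Finset.range (N - 1)).attach,
      (expValXsubY (Q ⟨i.1, by have := Finset.mem_range.mp i.2; omega⟩
                      ⟨i.1, by have := Finset.mem_range.mp i.2; omega⟩) +
       expValYsubX (Q ⟨i.1 + 1, by have := Finset.mem_range.mp i.2; omega⟩
                      ⟨i.1, by have := Finset.mem_range.mp i.2; omega⟩)))
    + expValXsubY (Q ⟨N - 1, by omega⟩ ⟨N - 1, by omega⟩)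
    + expValYsubXsubOne (Q ⟨0, hN⟩ ⟨N - 1, by omega⟩)

/-!
Fix the setting `c`. Write `A j` for the `(X,Z)`-marginal and `B j` for the `(Y,Z)`-marginal of
`p j j c`. By non-signaling, `B j` is also the `(Y,Z)`-marginal of `p (j+1) j c` and `A (j+1)` its
`(X,Z)`-marginal, so the coupling inequality bounds `‖A j - B j‖₁` and `‖B j - A (j+1)‖₁` by twice
the probability that `X` and `Y` disagree, hence by twice the expectations of `val` entering
`I_N`; the last link `B N → A 1 (· - 1)` uses `Y = X + 1` instead. Chaining
`A 1 → B 1 → A 2 → ⋯ → B N → A 1 (· - 1)` bounds the distance `S` between `A a` and its shift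
`A a (· - 1)` by `2 I_N`. Walking around `ZMod d` in both directions gives
`‖A a (x, ·) - A a (y, ·)‖₁ ≤ S / 2` for all `x, y`, and averaging over `y` bounds the deviation of
`A a (x, ·)` from its uniform average by `S / (2d) ≤ (d/8) S ≤ (d/4) I_N` (for `d = 1` the
shift is trivial and `S = 0`).
-/

section L1

variable {β : Type*} [Fintype β]

def l1dist (f g : β → ℝ) : ℝ := ∑ w, |f w - g w|

lemma l1dist_comm (f g : β → ℝ) : l1dist f g = l1dist g f := by
  simp only [l1dist, abs_sub_comm]

lemma l1dist_nonneg (f g : β → ℝ) : 0 ≤ l1dist f g :=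
  sum_nonneg fun _ _ => abs_nonneg _

lemma l1dist_triangle (f g h : β → ℝ) : l1dist f h ≤ l1dist f g + l1dist g h := by
  rw [l1dist, l1dist, l1dist, ← sum_add_distrib]
  exact sum_le_sum fun w _ => abs_sub_le _ _ _

lemma l1dist_comp_equiv {β' : Type*} [Fintype β'] (σ : β' ≃ β) (f g : β → ℝ) :
    l1dist (f ∘ σ) (g ∘ σ) = l1dist f g :=
  σ.sum_comp fun w => |f w - g w|

lemma l1dist_le_sum_Ico (F : ℕ → β → ℝ) {m n : ℕ} (h : m ≤ n) :
    l1dist (F m) (F n) ≤ ∑ i ∈ Ico m n, l1dist (F i) (F (i + 1)) := by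
  simp only [l1dist]
  rw [sum_comm]
  exact sum_le_sum fun w _ => dist_le_Ico_sum_dist (fun i => F i w) h

lemma l1dist_add_l1dist_le_sum_range (F : ℕ → β → ℝ) {k n : ℕ} (h : k ≤ n) :
    l1dist (F 0) (F k) + l1dist (F k) (F n) ≤ ∑ i ∈ range n, l1dist (F i) (F (i + 1)) := by
  rw [← sum_range_add_sum_Ico _ h, range_eq_Ico]
  exact add_le_add (l1dist_le_sum_Ico F k.zero_le) (l1dist_le_sum_Ico F h)

end L1

section Coupling

variable {α β γ : Type*}

def marginalXY [Fintype γ] (q : α × β × γ → ℝ) (w : α × β) : ℝ := ∑ z, q (w.1, w.2, z)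

def marginalXZ [Fintype β] (q : α × β × γ → ℝ) (w : α × γ) : ℝ := ∑ y, q (w.1, y, w.2)

def marginalYZ [Fintype α] (q : α × β × γ → ℝ) (w : β × γ) : ℝ := ∑ x, q (x, w.1, w.2)

def mismatchMass [Fintype α] [Fintype β] [DecidableEq β] (e : α ≃ β) (π : α × β → ℝ) : ℝ :=
  ∑ w, if w.2 = e w.1 then 0 else π w

lemma marginalXY_nonneg [Fintype γ] {q : α × β × γ → ℝ} (hq : 0 ≤ q) : 0 ≤ marginalXY q :=
  fun _ => sum_nonneg fun _ _ => hq _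

lemma sum_eq_add_sum_ite {ι : Type*} [Fintype ι] [DecidableEq ι] (f : ι → ℝ) (i : ι) :
    ∑ j, f j = f i + ∑ j, if j = i then 0 else f j := by
  rw [← add_sum_erase _ _ (mem_univ i), sum_ite, sum_const_zero, zero_add, filter_ne']

lemma l1dist_marginalYZ_le_two_mul_mismatchMass [Fintype α] [Fintype β] [Fintype γ]
    [DecidableEq β] (e : α ≃ β) (q : α × β × γ → ℝ) (hq : 0 ≤ q) :
    l1dist (marginalYZ q) (fun w => marginalXZ q (e.symm w.1, w.2)) ≤
      2 * mismatchMass e (marginalXY q) := by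
  classical
  set offX : β × γ → ℝ := fun w => ∑ x, if w.1 = e x then 0 else q (x, w.1, w.2)
  set offY : β × γ → ℝ := fun w => ∑ y, if y = w.1 then 0 else q (e.symm w.1, y, w.2)
  have hpoint : ∀ w, |marginalYZ q w - marginalXZ q (e.symm w.1, w.2)| ≤ offX w + offY w := by
    intro w
    have hX : marginalYZ q w = q (e.symm w.1, w.1, w.2) + offX w := by
      rw [marginalYZ, sum_eq_add_sum_ite _ (e.symm w.1)]
      simp only [offX, Equiv.eq_symm_apply, eq_comm]
    have hY : marginalXZ q (e.symm w.1, w.2) = q (e.symm w.1, w.1, w.2) + offY w :=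
      sum_eq_add_sum_ite _ w.1
    have h0X : 0 ≤ offX w := sum_nonneg fun x _ => by split_ifs; exacts [le_rfl, hq _]
    have h0Y : 0 ≤ offY w := sum_nonneg fun y _ => by split_ifs; exacts [le_rfl, hq _]
    rw [hX, hY, abs_le]
    constructor <;> linarith
  have hsumX : ∑ w, offX w = mismatchMass e (marginalXY q) := by
    simp only [offX, mismatchMass, marginalXY, ite_zero_sum, Fintype.sum_prod_type]
    exact (sum_congr rfl fun _ _ => sum_comm).trans sum_comm
  have hsumY : ∑ w, offY w = mismatchMass e (marginalXY q) := by
    simp only [offY, mismatchMass, marginalXY, ite_zero_sum, Fintype.sum_prod_type]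
    rw [← e.sum_comp]
    simp only [Equiv.symm_apply_apply]
    exact sum_congr rfl fun x _ => sum_comm
  calc l1dist (marginalYZ q) (fun w => marginalXZ q (e.symm w.1, w.2))
      ≤ ∑ w, (offX w + offY w) := sum_le_sum fun w _ => hpoint w
    _ = 2 * mismatchMass e (marginalXY q) := by rw [sum_add_distrib, hsumX, hsumY]; ring

end Coupling

section ZModCoupling

variable {d : ℕ} [NeZero d] {γ : Type*} [Fintype γ]

lemma mismatchMass_le_sum_val (e : ZMod d ≃ ZMod d) (π : ZMod d × ZMod d → ℝ) (hπ : 0 ≤ π)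
    (v : ZMod d × ZMod d → ZMod d) (hv : ∀ w, v w = 0 → w.2 = e w.1) :
    mismatchMass e π ≤ ∑ w, ((v w).val : ℝ) * π w := by
  refine sum_le_sum fun w _ => ?_
  split_ifs with h
  · exact mul_nonneg (Nat.cast_nonneg _) (hπ w)
  · have hval : (1 : ℝ) ≤ (v w).val := by
      exact_mod_cast Nat.one_le_iff_ne_zero.2 fun h0 => h (hv w ((ZMod.val_eq_zero _).1 h0))
    exact le_mul_of_one_le_left (hπ w) hval

variable (q : ZMod d × ZMod d × γ → ℝ)

lemma l1dist_marginalYZ_marginalXZ_le (hq : 0 ≤ q) :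
    l1dist (marginalYZ q) (marginalXZ q) ≤ 2 * expValYsubX (marginalXY q) := by
  refine (l1dist_marginalYZ_le_two_mul_mismatchMass (Equiv.refl _) q hq).trans ?_
  gcongr
  exact mismatchMass_le_sum_val _ _ (marginalXY_nonneg hq) (fun w => w.2 - w.1)
    fun w h => sub_eq_zero.1 h

lemma l1dist_marginalXZ_marginalYZ_le (hq : 0 ≤ q) :
    l1dist (marginalXZ q) (marginalYZ q) ≤ 2 * expValXsubY (marginalXY q) := by
  rw [l1dist_comm]
  refine (l1dist_marginalYZ_le_two_mul_mismatchMass (Equiv.refl _) q hq).trans ?_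
  gcongr
  exact mismatchMass_le_sum_val _ _ (marginalXY_nonneg hq) (fun w => w.1 - w.2)
    fun w h => (sub_eq_zero.1 h).symm

lemma l1dist_marginalYZ_marginalXZ_sub_one_le (hq : 0 ≤ q) :
    l1dist (marginalYZ q) (fun w => marginalXZ q (w.1 - 1, w.2)) ≤
      2 * expValYsubXsubOne (marginalXY q) := by
  refine (l1dist_marginalYZ_le_two_mul_mismatchMass (Equiv.subRight 1).symm q hq).trans ?_
  gcongr
  exact mismatchMass_le_sum_val _ _ (marginalXY_nonneg hq) (fun w => w.2 - w.1 - 1)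
    fun w h => by rwa [sub_sub, sub_eq_zero] at h

end ZModCoupling

section Cycle

variable {d : ℕ} [NeZero d] {γ : Type*} [Fintype γ]

lemma sum_range_sub_natCast (f : ZMod d → ℝ) (x : ZMod d) :
    ∑ j ∈ range d, f (x - j) = ∑ u, f u := by
  refine sum_nbij' (fun j => x - j) (fun u => (x - u).val) (fun _ _ => mem_univ _)
    (fun u _ => mem_range.2 (ZMod.val_lt _)) (fun j hj => ?_) (fun u _ => ?_) (fun _ _ => rfl)
  · simp only [sub_sub_cancel, ZMod.val_natCast_of_lt (mem_range.1 hj)]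
  · simp only [ZMod.natCast_zmod_val, sub_sub_cancel]

lemma two_mul_l1dist_le_l1dist_sub_one (M : ZMod d × γ → ℝ) (x y : ZMod d) :
    2 * l1dist (fun z => M (x, z)) (fun z => M (y, z)) ≤
      l1dist M (fun w => M (w.1 - 1, w.2)) := by
  set F : ℕ → γ → ℝ := fun j z => M (x - j, z)
  have hF0 : F 0 = fun z => M (x, z) := by simp [F]
  have hFk : F (x - y).val = fun z => M (y, z) := by simp [F]
  have hFd : F d = fun z => M (x, z) := by simp [F]
  have hchain := l1dist_add_l1dist_le_sum_range F (ZMod.val_lt (x - y)).le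
  rw [hF0, hFk, hFd, l1dist_comm (fun z => M (y, z))] at hchain
  have hsum :
      ∑ j ∈ range d, l1dist (F j) (F (j + 1)) = l1dist M (fun w => M (w.1 - 1, w.2)) := by
    simp only [F, l1dist, Nat.cast_succ, ← sub_sub, Fintype.sum_prod_type]
    exact sum_range_sub_natCast (fun u => ∑ z, |M (u, z) - M (u - 1, z)|) x
  linarith

lemma abs_sub_average_le {ι : Type*} [Fintype ι] (f : ι → ℝ) (i : ι) :
    |f i - (1 / Fintype.card ι) * ∑ j, f j| ≤ (1 / Fintype.card ι) * ∑ j, |f i - f j| := by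
  have : Nonempty ι := ⟨i⟩
  have hcard : (Fintype.card ι : ℝ) ≠ 0 := Nat.cast_ne_zero.2 Fintype.card_ne_zero
  have hdev :
      f i - (1 / Fintype.card ι) * ∑ j, f j = (1 / Fintype.card ι) * ∑ j, (f i - f j) := by
    rw [sum_sub_distrib, sum_const, card_univ, nsmul_eq_mul]
    field_simp
  rw [hdev, abs_mul, abs_of_nonneg (by positivity)]
  exact mul_le_mul_of_nonneg_left (abs_sum_le_sum_abs _ _) (by positivity)

lemma average_deviation_le (M : ZMod d × γ → ℝ) (x : ZMod d) :
    (1 / d) * ∑ z, |M (x, z) - (1 / d) * ∑ x', M (x', z)| ≤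
      l1dist M (fun w => M (w.1 - 1, w.2)) / (2 * d) := by
  set S := l1dist M (fun w => M (w.1 - 1, w.2))
  calc (1 / d) * ∑ z, |M (x, z) - (1 / d) * ∑ x', M (x', z)|
      ≤ (1 / d) * ∑ z, (1 / d) * ∑ y, |M (x, z) - M (y, z)| := by
        gcongr with z
        simpa only [ZMod.card] using abs_sub_average_le (fun u => M (u, z)) x
    _ = (1 / d) ^ 2 * ∑ y, l1dist (fun z => M (x, z)) (fun z => M (y, z)) := by
        rw [← mul_sum, sum_comm]; simp only [l1dist]; ring
    _ ≤ (1 / d) ^ 2 * ∑ _y : ZMod d, S / 2 := by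
        gcongr with y
        linarith [two_mul_l1dist_le_l1dist_sub_one M x y]
    _ = S / (2 * d) := by
        rw [sum_const, card_univ, ZMod.card, nsmul_eq_mul]; field_simp

lemma l1dist_sub_one_div_le (M : ZMod d × γ → ℝ) :
    l1dist M (fun w => M (w.1 - 1, w.2)) / (2 * d) ≤
      d / 8 * l1dist M (fun w => M (w.1 - 1, w.2)) := by
  obtain hd | hd := (Nat.one_le_iff_ne_zero.2 (NeZero.ne d)).eq_or_lt
  · subst hd
    have hshift : ∀ u : ZMod 1, u - 1 = u := fun _ => Subsingleton.elim _ _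
    simp [hshift, l1dist]
  · have hd2 : (2 : ℝ) ≤ d := by exact_mod_cast hd
    have hS := l1dist_nonneg M (fun w => M (w.1 - 1, w.2))
    rw [div_le_iff₀ (by positivity)]
    nlinarith [mul_nonneg (mul_nonneg hS (sub_nonneg.2 hd2)) (by linarith : (0:ℝ) ≤ d + 2)]

end Cycle

section Chain

variable {d : ℕ} [NeZero d] {γ ι : Type*} [Fintype γ] {p : ι → ι → ZMod d × ZMod d × γ → ℝ}

lemma l1dist_marginalXZ_diag_le (hp : ∀ a b, 0 ≤ p a b)
    (hXZ : ∀ a b b', marginalXZ (p a b) = marginalXZ (p a b'))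
    (hYZ : ∀ a a' b, marginalYZ (p a b) = marginalYZ (p a' b)) (j j' : ι) :
    l1dist (marginalXZ (p j j)) (marginalXZ (p j' j')) ≤
      2 * expValXsubY (marginalXY (p j j)) + 2 * expValYsubX (marginalXY (p j' j)) := by
  calc l1dist (marginalXZ (p j j)) (marginalXZ (p j' j'))
      ≤ l1dist (marginalXZ (p j j)) (marginalYZ (p j j)) +
          l1dist (marginalYZ (p j' j)) (marginalXZ (p j' j)) := by
        rw [hYZ j' j j, hXZ j' j' j]; exact l1dist_triangle _ _ _
    _ ≤ _ := add_le_add (l1dist_marginalXZ_marginalYZ_le _ (hp j j))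
        (l1dist_marginalYZ_marginalXZ_le _ (hp j' j))

lemma l1dist_marginalXZ_diag_sub_one_le (hp : ∀ a b, 0 ≤ p a b)
    (hXZ : ∀ a b b', marginalXZ (p a b) = marginalXZ (p a b'))
    (hYZ : ∀ a a' b, marginalYZ (p a b) = marginalYZ (p a' b)) (j j' : ι) :
    l1dist (marginalXZ (p j j)) (fun w => marginalXZ (p j' j') (w.1 - 1, w.2)) ≤
      2 * expValXsubY (marginalXY (p j j)) + 2 * expValYsubXsubOne (marginalXY (p j' j)) := by
  calc l1dist (marginalXZ (p j j)) (fun w => marginalXZ (p j' j') (w.1 - 1, w.2))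
      ≤ l1dist (marginalXZ (p j j)) (marginalYZ (p j j)) +
          l1dist (marginalYZ (p j' j)) (fun w => marginalXZ (p j' j) (w.1 - 1, w.2)) := by
        rw [hYZ j' j j, hXZ j' j' j]; exact l1dist_triangle _ _ _
    _ ≤ _ := add_le_add (l1dist_marginalXZ_marginalYZ_le _ (hp j j))
        (l1dist_marginalYZ_marginalXZ_sub_one_le _ (hp j' j))

end Chain

lemma chainedIN_succ {d n : ℕ} [NeZero d] (hN : 0 < n + 1)
    (Q : Fin (n + 1) → Fin (n + 1) → ZMod d × ZMod d → ℝ) :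
    chainedIN d (n + 1) hN Q =
      ∑ i : Fin n, (expValXsubY (Q i.castSucc i.castSucc) + expValYsubX (Q i.succ i.castSucc)) +
        expValXsubY (Q (Fin.last n) (Fin.last n)) + expValYsubXsubOne (Q 0 (Fin.last n)) := by
  rw [chainedIN]
  congr 2
  exact sum_bij' (fun i _ => ⟨i.1, mem_range.1 i.2⟩) (fun i _ => ⟨i.1, mem_range.2 i.2⟩)
    (fun _ _ => mem_univ _) (fun _ _ => mem_attach _ _) (fun _ _ => rfl) (fun _ _ => rfl)
    (fun _ _ => rfl)

lemma l1dist_marginalXZ_sub_one_le_chainedIN {d n : ℕ} [NeZero d] {γ : Type*} [Fintype γ]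
    (p : Fin (n + 1) → Fin (n + 1) → ZMod d × ZMod d × γ → ℝ) (hp : ∀ a b, 0 ≤ p a b)
    (hXZ : ∀ a b b', marginalXZ (p a b) = marginalXZ (p a b'))
    (hYZ : ∀ a a' b, marginalYZ (p a b) = marginalYZ (p a' b)) (a : Fin (n + 1)) :
    l1dist (marginalXZ (p a a)) (fun w => marginalXZ (p a a) (w.1 - 1, w.2)) ≤
      2 * chainedIN d (n + 1) n.succ_pos (fun a b => marginalXY (p a b)) := by
  set A : Fin (n + 1) → ZMod d × γ → ℝ := fun j => marginalXZ (p j j)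
  set σ : ZMod d × γ ≃ ZMod d × γ := (Equiv.subRight 1).prodCongr (Equiv.refl γ)
  set G : ℕ → ZMod d × γ → ℝ := fun j => if h : j < n + 1 then A ⟨j, h⟩ else A 0 ∘ σ
  have hG : ∀ j : Fin (n + 1), G j = A j := fun j => dif_pos j.isLt
  have hG0 : G 0 = A 0 := hG 0
  have hGn : G n = A (Fin.last n) := hG (Fin.last n)
  have hGlast : G (n + 1) = A 0 ∘ σ := dif_neg (lt_irrefl _)
  calc l1dist (A a) (A a ∘ σ)
      ≤ l1dist (A a) (A 0 ∘ σ) + l1dist (A 0 ∘ σ) (A a ∘ σ) := l1dist_triangle _ _ _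
    _ = l1dist (G 0) (G a) + l1dist (G a) (G (n + 1)) := by
        rw [l1dist_comp_equiv, hG, hGlast, add_comm, hG0]
    _ ≤ ∑ j ∈ range (n + 1), l1dist (G j) (G (j + 1)) :=
        l1dist_add_l1dist_le_sum_range G a.isLt.le
    _ = ∑ i : Fin n, l1dist (A i.castSucc) (A i.succ) + l1dist (A (Fin.last n)) (A 0 ∘ σ) := by
        rw [sum_range_succ, sum_range, hGlast, hGn]
        congr 1
        exact sum_congr rfl fun i _ => by
          have hi : G i = A i.castSucc := hG i.castSucc
          have hi' : G (i + 1) = A i.succ := hG i.succ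
          rw [hi, hi']
    _ ≤ 2 * chainedIN d (n + 1) n.succ_pos (fun a b => marginalXY (p a b)) := by
        rw [chainedIN_succ, add_assoc, mul_add, mul_sum]
        gcongr with i <;> rw [mul_add]
        · exact l1dist_marginalXZ_diag_le hp hXZ hYZ i.castSucc i.succ
        · exact l1dist_marginalXZ_diag_sub_one_le hp hXZ hYZ (Fin.last n) 0

theorem nonextendibility_bound_general (d N : ℕ) [NeZero d] (hN : 0 < N)
    (Γ Ω : Type) [Fintype Ω]
    (p : Fin N → Fin N → Γ → (ZMod d × ZMod d × Ω → ℝ))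
    (hnonneg : ∀ a b c w, 0 ≤ p a b c w)
    -- (ii) the (X,Z)-marginal does not depend on b
    (hXZ : ∀ a b b' c x z, ∑ y, p a b c (x, y, z) = ∑ y, p a b' c (x, y, z))
    -- (iii) the (Y,Z)-marginal does not depend on a
    (hYZ : ∀ a a' b c y z, ∑ x, p a b c (x, y, z) = ∑ x, p a' b c (x, y, z)) :
    ∀ (a b : Fin N) (c : Γ) (x : ZMod d),
      (1 / d) * ∑ z : Ω, |(∑ y : ZMod d, p a b c (x, y, z)) -
          (1 / d) * (∑ x' : ZMod d, ∑ y : ZMod d, p a b c (x', y, z))| ≤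
        (d / 4) * chainedIN d N hN
          (fun a' b' w => ∑ z : Ω, p a' b' c (w.1, w.2, z)) := by
  intro a b c x
  obtain ⟨n, rfl⟩ : ∃ n, N = n + 1 := ⟨N - 1, by omega⟩
  have hXZc : ∀ a b b', marginalXZ (p a b c) = marginalXZ (p a b' c) :=
    fun a b b' => funext fun w => hXZ a b b' c w.1 w.2
  have hYZc : ∀ a a' b, marginalYZ (p a b c) = marginalYZ (p a' b c) :=
    fun a a' b => funext fun w => hYZ a a' b c w.1 w.2
  have hchain := l1dist_marginalXZ_sub_one_le_chainedIN (fun a b => p a b c)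
    (fun a b => hnonneg a b c) hXZc hYZc a
  rw [hXZc a a b] at hchain
  calc _ ≤ _ := average_deviation_le (marginalXZ (p a b c)) x
    _ ≤ _ := l1dist_sub_one_div_le _
    _ ≤ d / 8 * (2 * chainedIN d (n + 1) hN fun a b => marginalXY (p a b c)) := by gcongr
    _ = d / 4 * chainedIN d (n + 1) hN fun a b => marginalXY (p a b c) := by ring

/-- Theorem 1 of the paper: for any non-signaling family of distributions
`p a b c` on `(ZMod d) × (ZMod d) × Ω`, the statistical distance between the
`(X,Z)`-marginal and the product of the uniform distribution with the `Z`-marginal is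
bounded by `(d/4)·I_N` of the `(X,Y)`-marginals, for all settings `a, c` and outcomes `x`. -/
theorem nonextendibility_bound (d N : ℕ) [NeZero d] (hN : 0 < N)
    (Γ Ω : Type) [Fintype Γ] [Fintype Ω] [Nonempty Γ] [Nonempty Ω]
    (p : Fin N → Fin N → Γ → (ZMod d × ZMod d × Ω → ℝ))
    (hnonneg : ∀ a b c w, 0 ≤ p a b c w)
    (hsum : ∀ a b c, ∑ w, p a b c w = 1)
    -- (i) the (X,Y)-marginal does not depend on c
    (hXY : ∀ a b c c' x y, ∑ z, p a b c (x, y, z) = ∑ z, p a b c' (x, y, z))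
    -- (ii) the (X,Z)-marginal does not depend on b
    (hXZ : ∀ a b b' c x z, ∑ y, p a b c (x, y, z) = ∑ y, p a b' c (x, y, z))
    -- (iii) the (Y,Z)-marginal does not depend on a
    (hYZ : ∀ a a' b c y z, ∑ x, p a b c (x, y, z) = ∑ x, p a' b c (x, y, z)) :
    ∀ (a b : Fin N) (c : Γ) (x : ZMod d),
      (1 / d) * ∑ z : Ω, |(∑ y : ZMod d, p a b c (x, y, z)) -
          (1 / d) * (∑ x' : ZMod d, ∑ y : ZMod d, p a b c (x', y, z))| ≤
        (d / 4) * chainedIN d N hN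
          (fun a' b' w => ∑ z : Ω, p a' b' c (w.1, w.2, z)) :=
  nonextendibility_bound_general d N hN Γ Ω p hnonneg hXZ hYZ
end

section
/- Let d ≥ 1, N ≥ 1, and let U, V be nonempty finite types (spaces of local hidden variables). Let p : Fin N → Fin N → ((ZMod d) × (ZMod d) × U × V → ℝ) be a family of probability distributions (nonnegative, summing to 1 for each (a,b)). Assume: (i) the (X,U,V)-marginal of p(a,b) does not depend on b; (ii) the (Y,U,V)-marginal of p(a,b) does not depend on a. Then for every a ∈ Fin N and every x ∈ ZMod d: (4/d)·(1/d)·Σ_{u ∈ U} |P_{XU}(x,u|a) − (1/d)·P_U(u)| ≤ I_N, where P_{XU}(·|a) is the (X,U)-marginal (independent of b by (i)), P_U is the U-marginal (independent of a and b), and I_N is the chained correlation quantity of the (X,Y)-marginals. The symmetric bound with Y, V, and b in place of X, U, and a also holds. -/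
open Finset

/-!
Fix the hidden variable of one side, say `u` (after summing out `v`), and regard the joint laws
`μ a` of `(X, u)` and `ν b` of `(Y, u)` as points of `ℓ¹(ZMod d × U)`; no-signalling says that
`μ a` does not depend on `b` and `ν b` does not depend on `a`. Coupling through `p a b` bounds
`‖μ a - ν b‖₁`, `‖ν b - μ a‖₁` and `‖ν b - σ (μ a)‖₁` by twice `E[val(X - Y)]`, `E[val(Y - X)]` and
`E[val(Y - X - 1)]`, where `σ` shifts the outcome by one. So the walk
`μ 1, ν 1, μ 2, …, μ N, ν N, σ (μ 1)` has length at most `2 I_N`, and as `σ` is an isometry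
every point `P` on it satisfies `‖P - σ P‖₁ ≤ 2 I_N`. Comparing `P` with its average over all
shifts `σᵏ` costs at most `(1/d) ∑ₖ k ‖P - σ P‖₁ = (d - 1)/2 ‖P - σ P‖₁`, and `4 (d - 1) ≤ d²`.
-/

namespace Isometry
variable {α : Type*} [PseudoMetricSpace α] {σ : α → α}

theorem dist_apply_le_sum_dist_of_chain (hσ : Isometry σ) (x : ℕ → α) {n k : ℕ} (hk : k ≤ n)
    (hx : x n = σ (x 0)) :
    dist (x k) (σ (x k)) ≤ ∑ i ∈ range n, dist (x i) (x (i + 1)) :=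
  calc dist (x k) (σ (x k)) ≤ dist (x k) (x n) + dist (σ (x 0)) (σ (x k)) :=
        hx ▸ dist_triangle _ _ _
    _ = dist (x k) (x n) + dist (x 0) (x k) := by rw [hσ.dist_eq]
    _ ≤ ∑ i ∈ Ico k n, dist (x i) (x (i + 1)) + ∑ i ∈ range k, dist (x i) (x (i + 1)) :=
        add_le_add (dist_le_Ico_sum_dist x hk) (dist_le_range_sum_dist x k)
    _ = ∑ i ∈ range n, dist (x i) (x (i + 1)) := by rw [add_comm, sum_range_add_sum_Ico _ hk]

theorem iterate (hσ : Isometry σ) (n : ℕ) : Isometry σ^[n] := by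
  induction n with
  | zero => exact isometry_id
  | succ n ih => exact ih.comp hσ

theorem dist_iterate_le (hσ : Isometry σ) (x : α) (n : ℕ) :
    dist x (σ^[n] x) ≤ n * dist x (σ x) := by
  simpa [Function.iterate_succ_apply, (hσ.iterate _).dist_eq] using
    dist_le_range_sum_dist (fun i => σ^[i] x) n

end Isometry

theorem Finset.sum_range_two_mul {M : Type*} [AddCommMonoid M] (f : ℕ → M) (n : ℕ) :
    ∑ j ∈ range (2 * n), f j = ∑ i ∈ range n, (f (2 * i) + f (2 * i + 1)) := by
  induction n with
  | zero => simp
  | succ n ih => rw [Nat.mul_succ, sum_range_succ, sum_range_succ, ih, sum_range_succ, add_assoc]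

theorem sum_abs_sum_fiber_sub_sum_fiber_le {β γ : Type*} [Fintype β] [Fintype γ] [DecidableEq γ]
    (π : β → ℝ) (hπ : ∀ w, 0 ≤ π w) (f g : β → γ) :
    ∑ c, |∑ w with f w = c, π w - ∑ w with g w = c, π w| ≤ 2 * ∑ w with f w ≠ g w, π w := by
  have hfiber (w : β) :
      ∑ c, |(if f w = c then π w else 0) - (if g w = c then π w else 0)| =
        if f w ≠ g w then 2 * π w else 0 := by
    split_ifs with h
    · rw [Fintype.sum_eq_add (f w) (g w) h fun c hc => by simp [Ne.symm hc.1, Ne.symm hc.2]]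
      simp [h, Ne.symm h, abs_of_nonneg (hπ w), two_mul]
    · simp [not_not.1 h]
  calc ∑ c, |∑ w with f w = c, π w - ∑ w with g w = c, π w|
      = ∑ c, |∑ w, ((if f w = c then π w else 0) - (if g w = c then π w else 0))| := by
        simp only [sum_filter, sum_sub_distrib]
    _ ≤ ∑ c, ∑ w, |(if f w = c then π w else 0) - (if g w = c then π w else 0)| :=
        sum_le_sum fun c _ => abs_sum_le_sum_abs _ _
    _ = 2 * ∑ w with f w ≠ g w, π w := by
        rw [sum_comm, sum_filter, mul_sum]
        simp only [hfiber, mul_ite, mul_zero]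

theorem ZMod.sum_val (d : ℕ) [NeZero d] : ∑ k : ZMod d, (k.val : ℝ) = d * (d - 1) / 2 := by
  obtain ⟨n, rfl⟩ : ∃ n, d = n + 1 := Nat.exists_eq_succ_of_ne_zero (NeZero.ne d)
  have gauss : ((∑ i ∈ range (n + 1), i : ℕ) : ℝ) * 2 = (n + 1) * n := by
    exact_mod_cast Nat.add_sub_cancel n 1 ▸ sum_range_id_mul_two (n + 1)
  rw [show ∑ k : ZMod (n + 1), (k.val : ℝ) = ∑ i ∈ range (n + 1), (i : ℝ) from
    Fin.sum_univ_eq_sum_range (fun i => (i : ℝ)) (n + 1), eq_div_iff two_ne_zero]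
  push_cast at gauss ⊢
  linarith

theorem four_div_mul_one_div_mul_le {t S D I : ℝ} (ht : 0 < t) (hS : S ≤ (t - 1) / 2 * D)
    (hD₀ : 0 ≤ D) (hD : D ≤ 2 * I) : 4 / t * (1 / t * S) ≤ I := by
  have hsq : 4 * (t - 1) ≤ t ^ 2 := by nlinarith [sq_nonneg (t - 2)]
  have : 4 / t * (1 / t * S) ≤ 4 * (t - 1) / t ^ 2 * (D / 2) := by
    rw [← mul_assoc, show 4 / t * (1 / t) = 4 / t ^ 2 by field_simp]
    calc 4 / t ^ 2 * S ≤ 4 / t ^ 2 * ((t - 1) / 2 * D) := by gcongr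
      _ = _ := by ring
  calc 4 / t * (1 / t * S) ≤ 4 * (t - 1) / t ^ 2 * (D / 2) := this
    _ ≤ 1 * (D / 2) := by gcongr; rwa [div_le_one (by positivity)]
    _ ≤ I := by linarith

section Chain
variable {α : Type*} [PseudoMetricSpace α] {σ : α → α} {d N : ℕ} [NeZero d]

theorem dist_shift_le_two_mul_chainedIN (hσ : Isometry σ) (hN : 0 < N)
    (Q : Fin N → Fin N → (ZMod d × ZMod d → ℝ)) (μ ν : Fin N → α)
    (hXY : ∀ a b, dist (μ a) (ν b) ≤ 2 * expValXsubY (Q a b))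
    (hYX : ∀ a b, dist (ν b) (μ a) ≤ 2 * expValYsubX (Q a b))
    (hYX1 : ∀ a b, dist (ν b) (σ (μ a)) ≤ 2 * expValYsubXsubOne (Q a b)) :
    (∀ a, dist (μ a) (σ (μ a)) ≤ 2 * chainedIN d N hN Q) ∧
      ∀ b, dist (ν b) (σ (ν b)) ≤ 2 * chainedIN d N hN Q := by
  -- the closed walk `μ 0, ν 0, μ 1, ν 1, …, μ (N-1), ν (N-1), σ (μ 0)`
  let x : ℕ → α := fun j =>
    if h : j / 2 < N then (if j % 2 = 0 then μ ⟨j / 2, h⟩ else ν ⟨j / 2, h⟩)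
    else σ (μ ⟨0, hN⟩)
  have hμ (i : ℕ) (h : i < N) : x (2 * i) = μ ⟨i, h⟩ := by
    simp [x, h]
  have hν (i : ℕ) (h : i < N) : x (2 * i + 1) = ν ⟨i, h⟩ := by
    have : (2 * i + 1) / 2 = i := by omega
    simp [x, this, h]
  have hend : x (2 * N) = σ (x 0) := by
    simp [x, hμ 0 hN]
  have hlen : ∑ j ∈ range (2 * N), dist (x j) (x (j + 1)) ≤ 2 * chainedIN d N hN Q := by
    let g : ℕ → ℝ := fun i =>
      dist (x (2 * i)) (x (2 * i + 1)) + dist (x (2 * i + 1)) (x (2 * i + 1 + 1))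
    have hsplit : ∑ i ∈ range N, g i = ∑ i ∈ (range (N - 1)).attach, g i + g (N - 1) := by
      rw [sum_attach, ← sum_range_succ, Nat.sub_add_cancel hN]
    have hstep (i : ℕ) (h : i + 1 < N) :
        g i ≤ 2 * (expValXsubY (Q ⟨i, by omega⟩ ⟨i, by omega⟩) +
          expValYsubX (Q ⟨i + 1, h⟩ ⟨i, by omega⟩)) := by
      rw [mul_add]
      refine add_le_add ?_ ?_
      · rw [hμ i (by omega), hν i (by omega)]; exact hXY _ _
      · rw [hν i (by omega), show 2 * i + 1 + 1 = 2 * (i + 1) by ring, hμ (i + 1) h]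
        exact hYX _ _
    have hlast : g (N - 1) ≤ 2 * (expValXsubY (Q ⟨N - 1, by omega⟩ ⟨N - 1, by omega⟩) +
        expValYsubXsubOne (Q ⟨0, hN⟩ ⟨N - 1, by omega⟩)) := by
      rw [mul_add]
      refine add_le_add ?_ ?_
      · rw [hμ (N - 1) (by omega), hν (N - 1) (by omega)]; exact hXY _ _
      · rw [hν (N - 1) (by omega), show 2 * (N - 1) + 1 + 1 = 2 * N by omega, hend, hμ 0 hN]
        exact hYX1 _ _
    rw [sum_range_two_mul, hsplit, chainedIN, mul_add, mul_add, mul_sum]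
    have := sum_le_sum fun (i : {i // i ∈ range (N - 1)}) (_ : i ∈ (range (N - 1)).attach) =>
      hstep i.1 (by have := mem_range.mp i.2; omega)
    linarith
  refine ⟨fun a => ?_, fun b => ?_⟩
  · rw [← hμ a a.2]
    exact (hσ.dist_apply_le_sum_dist_of_chain x (by omega) hend).trans hlen
  · rw [← hν b b.2]
    exact (hσ.dist_apply_le_sum_dist_of_chain x (by omega) hend).trans hlen

end Chain

section HiddenVariables
variable {d N : ℕ} [NeZero d] {Λ : Type*} [Fintype Λ]

variable (d Λ) in
noncomputable def outcomeShift :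
    PiLp 1 (fun _ : ZMod d × Λ => ℝ) ≃ₗᵢ[ℝ] PiLp 1 (fun _ : ZMod d × Λ => ℝ) :=
  LinearIsometryEquiv.piLpCongrLeft 1 ℝ ℝ ((Equiv.addRight 1).prodCongr (Equiv.refl Λ))

theorem outcomeShift_apply (f : PiLp 1 (fun _ : ZMod d × Λ => ℝ)) (z : ZMod d) (l : Λ) :
    outcomeShift d Λ f (z, l) = f (z - 1, l) := by
  simp [outcomeShift, Equiv.piCongrLeft', sub_eq_add_neg]

theorem outcomeShift_iterate_apply (f : PiLp 1 (fun _ : ZMod d × Λ => ℝ)) (n : ℕ) (z : ZMod d)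
    (l : Λ) : (outcomeShift d Λ)^[n] f (z, l) = f (z - n, l) := by
  induction n generalizing z with
  | zero => simp
  | succ n ih =>
    rw [Function.iterate_succ_apply', outcomeShift_apply, ih, Nat.cast_succ, sub_sub, add_comm]

noncomputable def xHiddenMarginal (π : ZMod d × ZMod d × Λ → ℝ) :
    PiLp 1 (fun _ : ZMod d × Λ => ℝ) :=
  WithLp.toLp 1 fun w => ∑ y, π (w.1, y, w.2)

noncomputable def yHiddenMarginal (π : ZMod d × ZMod d × Λ → ℝ) :
    PiLp 1 (fun _ : ZMod d × Λ => ℝ) :=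
  WithLp.toLp 1 fun w => ∑ x, π (x, w.1, w.2)

def xyMarginal (π : ZMod d × ZMod d × Λ → ℝ) : ZMod d × ZMod d → ℝ :=
  fun w => ∑ l, π (w.1, w.2, l)

theorem dist_yHiddenMarginal_iterate_shift_xHiddenMarginal_le (π : ZMod d × ZMod d × Λ → ℝ)
    (hπ : ∀ w, 0 ≤ π w) (n : ℕ) (h : ZMod d × ZMod d → ZMod d)
    (hh : ∀ w, h w = 0 → w.2 = w.1 + n) :
    dist (yHiddenMarginal π) ((outcomeShift d Λ)^[n] (xHiddenMarginal π)) ≤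
      2 * ∑ w, ((h w).val : ℝ) * xyMarginal π w := by
  classical
  calc dist (yHiddenMarginal π) ((outcomeShift d Λ)^[n] (xHiddenMarginal π))
      = ∑ c : ZMod d × Λ, |∑ w with (w.2.1, w.2.2) = c, π w -
            ∑ w with ((w.1 + n : ZMod d), w.2.2) = c, π w| := by
        rw [PiLp.dist_eq_of_L1]
        refine sum_congr rfl fun ⟨z, l⟩ _ => ?_
        simp [Real.dist_eq, yHiddenMarginal, xHiddenMarginal, outcomeShift_iterate_apply,
          sum_filter, Fintype.sum_prod_type, Prod.ext_iff, ite_and, ← eq_sub_iff_add_eq]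
    _ ≤ 2 * ∑ w with (w.2.1, w.2.2) ≠ ((w.1 + n : ZMod d), w.2.2), π w :=
        sum_abs_sum_fiber_sub_sum_fiber_le π hπ _ _
    _ ≤ 2 * ∑ w, ((h w).val : ℝ) * xyMarginal π w := by
        have hval (w : ZMod d × ZMod d × Λ)
            (hw : (w.2.1, w.2.2) ≠ ((w.1 + n : ZMod d), w.2.2)) :
            1 ≤ ((h (w.1, w.2.1)).val : ℝ) :=
          Nat.one_le_cast.2 <| ZMod.val_pos.2 fun h0 =>
            hw (by rw [show w.2.1 = w.1 + n from hh _ h0])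
        calc 2 * ∑ w with (w.2.1, w.2.2) ≠ ((w.1 + n : ZMod d), w.2.2), π w
            ≤ 2 * ∑ w : ZMod d × ZMod d × Λ, ((h (w.1, w.2.1)).val : ℝ) * π w := by
              rw [sum_filter]
              gcongr with w
              split_ifs with hw
              · exact le_mul_of_one_le_left (hπ w) (hval w hw)
              · exact mul_nonneg (Nat.cast_nonneg _) (hπ w)
          _ = 2 * ∑ w, ((h w).val : ℝ) * xyMarginal π w := by
              simp [Fintype.sum_prod_type, xyMarginal, mul_sum]

theorem sum_abs_sub_le_dist {α : Type*} [Fintype α] (f g : PiLp 1 (fun _ : α × Λ => ℝ))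
    (z : α) :
    ∑ l, |f (z, l) - g (z, l)| ≤ dist f g := by
  rw [PiLp.dist_eq_of_L1, Fintype.sum_prod_type]
  exact single_le_sum (f := fun z => ∑ l, dist (f (z, l)) (g (z, l)))
    (fun _ _ => sum_nonneg fun _ _ => dist_nonneg) (mem_univ z)

theorem sum_abs_sub_average_le (f : PiLp 1 (fun _ : ZMod d × Λ => ℝ)) (x : ZMod d) :
    ∑ l, |f (x, l) - (1 / d) * ∑ z, f (z, l)| ≤
      ((d : ℝ) - 1) / 2 * dist f (outcomeShift d Λ f) := by
  have hd : (0 : ℝ) < d := Nat.cast_pos.2 (NeZero.pos d)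
  have hrow (l : Λ) : f (x, l) - (1 / d) * ∑ z, f (z, l) =
      (1 / d) * ∑ k : ZMod d, (f (x, l) - f (x - k, l)) := by
    rw [sum_sub_distrib, sum_const, card_univ, ZMod.card, nsmul_eq_mul,
      ← (Equiv.subLeft x).sum_comp (fun z => f (z, l))]
    field_simp
    rfl
  have hshift (k : ZMod d) :
      ∑ l, |f (x, l) - f (x - k, l)| ≤ k.val * dist f (outcomeShift d Λ f) := by
    calc ∑ l, |f (x, l) - f (x - k, l)| ≤ dist f ((outcomeShift d Λ)^[k.val] f) := by
          simpa [outcomeShift_iterate_apply] using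
            sum_abs_sub_le_dist f ((outcomeShift d Λ)^[k.val] f) x
      _ ≤ k.val * dist f (outcomeShift d Λ f) :=
          (outcomeShift d Λ).isometry.dist_iterate_le f k.val
  calc ∑ l, |f (x, l) - (1 / d) * ∑ z, f (z, l)|
      ≤ ∑ l, (1 / d) * ∑ k : ZMod d, |f (x, l) - f (x - k, l)| := by
        gcongr with l
        rw [hrow, abs_mul, abs_of_pos (by positivity)]
        gcongr
        exact abs_sum_le_sum_abs _ _
    _ = (1 / d) * ∑ k : ZMod d, ∑ l, |f (x, l) - f (x - k, l)| := by rw [← mul_sum, sum_comm]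
    _ ≤ (1 / d) * ∑ k : ZMod d, k.val * dist f (outcomeShift d Λ f) := by
        gcongr with k
        exact hshift k
    _ = ((d : ℝ) - 1) / 2 * dist f (outcomeShift d Λ f) := by
        rw [← sum_mul, ZMod.sum_val]
        field_simp

theorem single_hidden_variable_bound (hN : 0 < N)
    (π : Fin N → Fin N → ZMod d × ZMod d × Λ → ℝ) (hπ : ∀ a b w, 0 ≤ π a b w)
    (hX : ∀ a b b' x l, ∑ y, π a b (x, y, l) = ∑ y, π a b' (x, y, l))
    (hY : ∀ a a' b y l, ∑ x, π a b (x, y, l) = ∑ x, π a' b (x, y, l)) :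
    (∀ a b x, 4 / d * (1 / d * ∑ l, |∑ y, π a b (x, y, l) - 1 / d * ∑ x', ∑ y, π a b (x', y, l)|)
      ≤ chainedIN d N hN fun a b => xyMarginal (π a b)) ∧
    ∀ a b y, 4 / d * (1 / d * ∑ l, |∑ x, π a b (x, y, l) - 1 / d * ∑ y', ∑ x, π a b (x, y', l)|)
      ≤ chainedIN d N hN fun a b => xyMarginal (π a b) := by
  have hd : (0 : ℝ) < d := Nat.cast_pos.2 (NeZero.pos d)
  let μ a := xHiddenMarginal (π a ⟨0, hN⟩)
  let ν b := yHiddenMarginal (π ⟨0, hN⟩ b)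
  have hμ a b : xHiddenMarginal (π a b) = μ a := by
    ext ⟨x, l⟩; exact hX a b _ x l
  have hν a b : yHiddenMarginal (π a b) = ν b := by
    ext ⟨y, l⟩; exact hY a _ b y l
  obtain ⟨hμσ, hνσ⟩ := dist_shift_le_two_mul_chainedIN (outcomeShift d Λ).isometry hN
    (fun a b => xyMarginal (π a b)) μ ν
    (fun a b => by
      rw [← hμ a b, ← hν a b, dist_comm]
      exact dist_yHiddenMarginal_iterate_shift_xHiddenMarginal_le (π a b) (hπ a b) 0
        (fun w => w.1 - w.2) fun w h => by simpa [sub_eq_zero, eq_comm] using h)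
    (fun a b => by
      rw [← hμ a b, ← hν a b]
      exact dist_yHiddenMarginal_iterate_shift_xHiddenMarginal_le (π a b) (hπ a b) 0
        (fun w => w.2 - w.1) fun w h => by simpa [sub_eq_zero] using h)
    (fun a b => by
      rw [← hμ a b, ← hν a b]
      exact dist_yHiddenMarginal_iterate_shift_xHiddenMarginal_le (π a b) (hπ a b) 1
        (fun w => w.2 - w.1 - 1) fun w h => by simpa [sub_sub, sub_eq_zero] using h)
  refine ⟨fun a b x => ?_, fun a b y => ?_⟩
  · exact four_div_mul_one_div_mul_le hd
      ((sum_abs_sub_average_le (xHiddenMarginal (π a b)) x).trans_eq (by rw [hμ a b]))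
      dist_nonneg (hμσ a)
  · exact four_div_mul_one_div_mul_le hd
      ((sum_abs_sub_average_le (yHiddenMarginal (π a b)) y).trans_eq (by rw [hν a b]))
      dist_nonneg (hνσ b)

end HiddenVariables

theorem local_hidden_variable_bound_general (d N : ℕ) [NeZero d] (hN : 0 < N)
    (U V : Type) [Fintype U] [Fintype V]
    (p : Fin N → Fin N → (ZMod d × ZMod d × U × V → ℝ))
    (hnonneg : ∀ a b w, 0 ≤ p a b w)
    -- (i) the (X,U,V)-marginal does not depend on b
    (hXUV : ∀ a b b' x u v, ∑ y, p a b (x, y, u, v) = ∑ y, p a b' (x, y, u, v))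
    -- (ii) the (Y,U,V)-marginal does not depend on a
    (hYUV : ∀ a a' b y u v, ∑ x, p a b (x, y, u, v) = ∑ x, p a' b (x, y, u, v)) :
    (∀ (a b : Fin N) (x : ZMod d),
      (4 / d) * ((1 / d) * ∑ u : U,
          |(∑ y : ZMod d, ∑ v : V, p a b (x, y, u, v)) -
            (1 / d) * (∑ x' : ZMod d, ∑ y : ZMod d, ∑ v : V, p a b (x', y, u, v))|) ≤
        chainedIN d N hN (fun a' b' w => ∑ u : U, ∑ v : V, p a' b' (w.1, w.2, u, v))) ∧
    (∀ (a b : Fin N) (y : ZMod d),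
      (4 / d) * ((1 / d) * ∑ v : V,
          |(∑ x : ZMod d, ∑ u : U, p a b (x, y, u, v)) -
            (1 / d) * (∑ y' : ZMod d, ∑ x : ZMod d, ∑ u : U, p a b (x, y', u, v))|) ≤
        chainedIN d N hN (fun a' b' w => ∑ u : U, ∑ v : V, p a' b' (w.1, w.2, u, v))) := by
  have boundU := single_hidden_variable_bound hN
    (fun a b w => ∑ v, p a b (w.1, w.2.1, w.2.2, v))
    (fun a b w => sum_nonneg fun v _ => hnonneg a b _)
    (fun a b b' x u =>
      sum_comm.trans <| (sum_congr rfl fun v _ => hXUV a b b' x u v).trans sum_comm)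
    (fun a a' b y u =>
      sum_comm.trans <| (sum_congr rfl fun v _ => hYUV a a' b y u v).trans sum_comm)
  have boundV := single_hidden_variable_bound hN
    (fun a b w => ∑ u, p a b (w.1, w.2.1, u, w.2.2))
    (fun a b w => sum_nonneg fun u _ => hnonneg a b _)
    (fun a b b' x v =>
      sum_comm.trans <| (sum_congr rfl fun u _ => hXUV a b b' x u v).trans sum_comm)
    (fun a a' b y v =>
      sum_comm.trans <| (sum_congr rfl fun u _ => hYUV a a' b y u v).trans sum_comm)
  have hQ : (fun a b => xyMarginal fun w => ∑ u, p a b (w.1, w.2.1, u, w.2.2)) =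
      fun a' b' w => ∑ u : U, ∑ v : V, p a' b' (w.1, w.2, u, v) := by
    funext a b w
    exact sum_comm
  exact ⟨boundU.1, hQ ▸ boundV.2⟩

/-- Inequalities (8) and (9) of the paper: in any hidden-variable model whose local variables
`U, V` satisfy the no-signaling conditions, the dependence of each outcome on its local hidden
variable, measured by `(4/d)·Δ(P_{XU|a}, uniform × P_U)` (resp. with `Y, V, b`), is bounded by
the chained correlation quantity `I_N` of the `(X,Y)`-marginals. -/
theorem local_hidden_variable_bound (d N : ℕ) [NeZero d] (hN : 0 < N)
    (U V : Type) [Fintype U] [Fintype V] [Nonempty U] [Nonempty V]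
    (p : Fin N → Fin N → (ZMod d × ZMod d × U × V → ℝ))
    (hnonneg : ∀ a b w, 0 ≤ p a b w)
    (hsum : ∀ a b, ∑ w, p a b w = 1)
    -- (i) the (X,U,V)-marginal does not depend on b
    (hXUV : ∀ a b b' x u v, ∑ y, p a b (x, y, u, v) = ∑ y, p a b' (x, y, u, v))
    -- (ii) the (Y,U,V)-marginal does not depend on a
    (hYUV : ∀ a a' b y u v, ∑ x, p a b (x, y, u, v) = ∑ x, p a' b (x, y, u, v)) :
    (∀ (a b : Fin N) (x : ZMod d),
      (4 / d) * ((1 / d) * ∑ u : U,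
          |(∑ y : ZMod d, ∑ v : V, p a b (x, y, u, v)) -
            (1 / d) * (∑ x' : ZMod d, ∑ y : ZMod d, ∑ v : V, p a b (x', y, u, v))|) ≤
        chainedIN d N hN (fun a' b' w => ∑ u : U, ∑ v : V, p a' b' (w.1, w.2, u, v))) ∧
    (∀ (a b : Fin N) (y : ZMod d),
      (4 / d) * ((1 / d) * ∑ v : V,
          |(∑ x : ZMod d, ∑ u : U, p a b (x, y, u, v)) -
            (1 / d) * (∑ y' : ZMod d, ∑ x : ZMod d, ∑ u : U, p a b (x, y', u, v))|) ≤
        chainedIN d N hN (fun a' b' w => ∑ u : U, ∑ v : V, p a' b' (w.1, w.2, u, v))) :=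
  local_hidden_variable_bound_general d N hN U V p hnonneg hXUV hYUV
end

section
/- Let d ≥ 1, let p : ZMod d → ℝ be a probability distribution (p(x) ≥ 0 for all x and Σ_x p(x) = 1), and let I ≥ 0 satisfy |p(x+1) − p(x)| ≤ I for all x ∈ ZMod d. Then |p(x) − 1/d| ≤ (d/4)·I for all x ∈ ZMod d. -/
open Finset

private lemma sumMin : ∀ d : ℕ, 4 * ∑ k ∈ Finset.range d, min k (d - k) ≤ d ^ 2
  | 0 => by simp
  | 1 => by simp
  | (d + 2) => by
      have hshift : ∑ k ∈ Finset.range (d + 2), min k (d + 2 - k)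
          = ∑ j ∈ Finset.range (d + 1), (min j (d - j) + 1) := by
        rw [Finset.sum_range_succ', Nat.zero_min, add_zero]
        refine Finset.sum_congr rfl fun j hj => ?_
        have hj' : j ≤ d := by
          have := Finset.mem_range.mp hj; omega
        have : d + 2 - (j + 1) = (d - j) + 1 := by omega
        rw [this, Nat.succ_min_succ]
      have hsplit : ∑ j ∈ Finset.range (d + 1), (min j (d - j) + 1)
          = (∑ j ∈ Finset.range d, min j (d - j)) + (d + 1) := by
        rw [Finset.sum_add_distrib, Finset.sum_range_succ]
        simp
      have ih := sumMin d
      rw [hshift, hsplit]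
      nlinarith [ih]

private lemma step_bound (d : ℕ) [NeZero d] (p : ZMod d → ℝ) (I : ℝ)
    (hdiff : ∀ x : ZMod d, |p (x + 1) - p x| ≤ I) :
    ∀ n : ℕ, ∀ x : ZMod d, |p (x + (n : ZMod d)) - p x| ≤ n * I := by
  intro n
  induction n with
  | zero => intro x; simp
  | succ n ih =>
      intro x
      have h1 : |p (x + (n : ZMod d) + 1) - p (x + (n : ZMod d))| ≤ I := hdiff _
      have h2 := ih x
      calc |p (x + ((n + 1 : ℕ) : ZMod d)) - p x|
          = |(p (x + (n : ZMod d) + 1) - p (x + (n : ZMod d)))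
              + (p (x + (n : ZMod d)) - p x)| := by
            push_cast; ring_nf
        _ ≤ |p (x + (n : ZMod d) + 1) - p (x + (n : ZMod d))|
              + |p (x + (n : ZMod d)) - p x| := abs_add_le _ _
        _ ≤ I + n * I := add_le_add h1 h2
        _ = (n + 1 : ℕ) * I := by push_cast; ring

/-- Key combinatorial step (P1) in the proof of Theorem 1: if all cyclic nearest-neighbor
differences of a probability distribution on `ZMod d` are at most `I`, then the distribution
is within `(d/4)·I` of the uniform distribution in sup norm. -/
theorem close_to_uniform_of_cyclic_diff_small (d : ℕ) [NeZero d] (p : ZMod d → ℝ)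
    (hnonneg : ∀ x, 0 ≤ p x) (hsum : ∑ x, p x = 1)
    (I : ℝ) (hI : 0 ≤ I) (hdiff : ∀ x : ZMod d, |p (x + 1) - p x| ≤ I) :
    ∀ x : ZMod d, |p x - 1 / d| ≤ (d / 4) * I := by
  intro x
  have hd0 : 0 < (d : ℝ) := by
    exact_mod_cast Nat.pos_of_ne_zero (NeZero.ne d)
  -- pointwise bound
  have key : ∀ y : ZMod d,
      |p y - p x| ≤ (min ((y - x).val) (d - (y - x).val) : ℕ) * I := by
    intro y
    set k : ℕ := (y - x).val with hk
    have hkd : k ≤ d := le_of_lt (ZMod.val_lt _)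
    have hxy : x + (k : ZMod d) = y := by
      rw [hk, ZMod.natCast_val, ZMod.cast_id]; ring
    have hfwd : |p y - p x| ≤ k * I := by
      have := step_bound d p I hdiff k x
      rwa [hxy] at this
    have hbwd : |p y - p x| ≤ ((d - k : ℕ) : ℝ) * I := by
      have hcast : ((d - k : ℕ) : ZMod d) = -(k : ZMod d) := by
        have : ((d : ℕ) : ZMod d) = 0 := ZMod.natCast_self d
        push_cast [hkd]
        rw [this]; ring
      have := step_bound d p I hdiff (d - k) y
      rw [hcast] at this
      have hyx : y + -(k : ZMod d) = x := by
        rw [← hxy]; ring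
      rw [hyx, abs_sub_comm] at this
      exact this
    rcases min_cases k (d - k) with ⟨hmin, _⟩ | ⟨hmin, _⟩ <;> rw [hmin]
    · exact hfwd
    · exact hbwd
  -- sum the bounds
  have hsum1 : (d : ℝ) * p x - 1 = ∑ y : ZMod d, (p x - p y) := by
    rw [Finset.sum_sub_distrib, Finset.sum_const, hsum]
    simp [ZMod.card, mul_comm, nsmul_eq_mul]
  have hbig : |(d : ℝ) * p x - 1|
      ≤ (∑ k ∈ Finset.range d, ((min k (d - k) : ℕ) : ℝ)) * I := by
    rw [hsum1]
    calc |∑ y : ZMod d, (p x - p y)|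
        ≤ ∑ y : ZMod d, |p x - p y| := Finset.abs_sum_le_sum_abs _ _
      _ ≤ ∑ y : ZMod d, ((min ((y - x).val) (d - (y - x).val) : ℕ) * I) := by
          apply Finset.sum_le_sum
          intro y _
          rw [abs_sub_comm]
          exact key y
      _ = (∑ y : ZMod d, ((min ((y - x).val) (d - (y - x).val) : ℕ) : ℝ)) * I := by
          rw [Finset.sum_mul]
      _ = (∑ k ∈ Finset.range d, ((min k (d - k) : ℕ) : ℝ)) * I := by
          congr 1
          refine Finset.sum_nbij' (fun y => (y - x).val) (fun k => x + (k : ZMod d))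
            ?_ ?_ ?_ ?_ ?_
          · intro y _; exact Finset.mem_range.mpr (ZMod.val_lt _)
          · intro k _; exact Finset.mem_univ _
          · intro y _
            show x + (((y - x).val : ℕ) : ZMod d) = y
            rw [ZMod.natCast_val, ZMod.cast_id]; ring
          · intro k hk
            show ((x + (k : ZMod d)) - x).val = k
            rw [add_sub_cancel_left, ZMod.val_natCast_of_lt (Finset.mem_range.mp hk)]
          · intro y _; rfl
  have hsumle : (∑ k ∈ Finset.range d, ((min k (d - k) : ℕ) : ℝ)) ≤ (d : ℝ) ^ 2 / 4 := by
    have h4 : (4 : ℝ) * (∑ k ∈ Finset.range d, ((min k (d - k) : ℕ) : ℝ)) ≤ (d : ℝ) ^ 2 := by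
      exact_mod_cast sumMin d
    linarith
  have hbig2 : |(d : ℝ) * p x - 1| ≤ (d : ℝ) ^ 2 / 4 * I := by
    calc |(d : ℝ) * p x - 1| ≤ _ := hbig
      _ ≤ (d : ℝ) ^ 2 / 4 * I := by
          exact mul_le_mul_of_nonneg_right hsumle hI
  have heq : p x - 1 / d = ((d : ℝ) * p x - 1) / d := by field_simp
  rw [heq, abs_div, abs_of_pos hd0]
  calc |(d : ℝ) * p x - 1| / d ≤ ((d : ℝ) ^ 2 / 4 * I) / d := by gcongr
    _ = (d / 4) * I := by field_simp
end

section
/- Let N ≥ 1 and for A = 1,…,N define the unit vectors a_A := (cos((A − 1/2)·π/N), sin((A − 1/2)·π/N)) in ℝ². Then for every unit vector u ∈ ℝ² there exists A ∈ {1,…,N} with |⟪a_A, u⟫| ≥ cos(π/(2N)). -/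
open Real

/-- The measurement direction `a_A = (cos((A − 1/2)·π/N), sin((A − 1/2)·π/N))` in the plane. -/
noncomputable def measDir (N A : ℕ) : EuclideanSpace ℝ (Fin 2) :=
  WithLp.toLp 2 fun (i : Fin 2) => if i = 0 then Real.cos (((A : ℝ) - 1 / 2) * Real.pi / N)
           else Real.sin (((A : ℝ) - 1 / 2) * Real.pi / N)

/-! Write `u = (cos θ, sin θ)`, so that `⟪a_A, u⟫ = cos (φ_A - θ)` with `φ_A = (A - 1/2)π/N`.
Since `|cos|` has period `π` and the angles `φ_A` are the midpoints of the `N` cells of width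
`π/N` tiling `[0, π)`, some `φ_A` lies within `π/(2N)` of `θ` modulo `π`. -/

namespace Real

lemma abs_cos_sub_int_mul_pi (x : ℝ) (k : ℤ) : |cos (x - k * π)| = |cos x| := by
  rw [cos_sub_int_mul_pi, abs_mul, abs_neg_one_zpow, one_mul]

lemma cos_le_cos_of_abs_le {x a : ℝ} (hxa : |x| ≤ a) (ha : a ≤ π) : cos a ≤ cos x := by
  rw [← cos_abs x]
  exact cos_le_cos_of_nonneg_of_le_pi (abs_nonneg x) ha hxa

end Real

lemma EuclideanSpace.exists_eq_cos_sin_of_norm_eq_one {u : EuclideanSpace ℝ (Fin 2)}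
    (hu : ‖u‖ = 1) : ∃ θ : ℝ, u 0 = cos θ ∧ u 1 = sin θ := by
  set z : ℂ := Complex.orthonormalBasisOneI.repr.symm u with hz_def
  have hz : ‖z‖ = 1 := by rw [hz_def, LinearIsometryEquiv.norm_map, hu]
  refine ⟨z.arg, ?_, ?_⟩
  · rw [Complex.cos_arg (norm_ne_zero_iff.mp (hz ▸ one_ne_zero)), hz, div_one]
    simp [z]
  · rw [Complex.sin_arg, hz, div_one]
    simp [z]

lemma inner_measDir (N A : ℕ) (u : EuclideanSpace ℝ (Fin 2)) :
    inner ℝ (measDir N A) u =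
      cos (((A : ℝ) - 1 / 2) * π / N) * u 0 + sin (((A : ℝ) - 1 / 2) * π / N) * u 1 := by
  simp [measDir, PiLp.inner_apply, Fin.sum_univ_two, mul_comm]

lemma abs_sub_floor_add_half_mul_le {h : ℝ} (hh : 0 < h) (x : ℝ) :
    |x - (⌊x / h⌋ + 1 / 2) * h| ≤ h / 2 := by
  have hlo : (⌊x / h⌋ : ℝ) * h ≤ x := (le_div_iff₀ hh).mp (Int.floor_le _)
  have hhi : x < (⌊x / h⌋ + 1) * h := (div_lt_iff₀ hh).mp (Int.lt_floor_add_one _)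
  rw [abs_le]
  constructor <;> linarith

lemma exists_abs_sub_midpoint_le {h : ℝ} (hh : 0 < h) {N : ℕ} (hN : 0 < N) (x : ℝ) :
    ∃ r < N, ∃ k : ℤ, |x - (r + 1 / 2) * h - k * (N * h)| ≤ h / 2 := by
  set j := ⌊x / h⌋
  have hr0 : 0 ≤ j % N := Int.emod_nonneg j (by omega)
  have hrN : j % N < N := Int.emod_lt_of_pos j (by omega)
  refine ⟨(j % N).toNat, by omega, j / N, ?_⟩
  have hj : ((j % N).toNat : ℝ) + N * (j / N : ℤ) = j := by
    have := Int.emod_add_mul_ediv j N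
    exact_mod_cast (by omega : ((j % N).toNat : ℤ) + N * (j / N) = j)
  calc |x - ((j % N).toNat + 1 / 2) * h - (j / N : ℤ) * (N * h)|
      = |x - (j + 1 / 2) * h| := by rw [← hj]; ring_nf
    _ ≤ h / 2 := abs_sub_floor_add_half_mul_le hh x

/-- The geometric fact underlying the Leggett-model bound `I_N ≥ cos(π/(2N))`: for the `N`
measurement directions `a_A`, `A = 1, …, N`, spaced at angular intervals `π/N`, every unit
vector `u` in the plane satisfies `|⟪a_A, u⟫| ≥ cos(π/(2N))` for some setting `A`. -/
theorem exists_direction_close (N : ℕ) (hN : 1 ≤ N) :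
    ∀ u : EuclideanSpace ℝ (Fin 2), ‖u‖ = 1 →
      ∃ A ∈ Finset.Icc 1 N,
        Real.cos (Real.pi / (2 * N)) ≤ |(inner ℝ (measDir N A) u : ℝ)| := by
  intro u hu
  obtain ⟨θ, hu0, hu1⟩ := EuclideanSpace.exists_eq_cos_sin_of_norm_eq_one hu
  have hN1 : (1 : ℝ) ≤ N := by exact_mod_cast hN
  obtain ⟨r, hrN, k, hclose⟩ :=
    exists_abs_sub_midpoint_le (div_pos pi_pos (by linarith : (0 : ℝ) < N)) hN θ
  set d := θ - (r + 1 / 2) * (π / N) - k * (N * (π / N))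
  refine ⟨r + 1, Finset.mem_Icc.mpr ⟨by omega, by omega⟩, ?_⟩
  have hangle : (((r + 1 : ℕ) : ℝ) - 1 / 2) * π / N - θ = -d - k * π := by
    simp only [d]; push_cast; field_simp; ring
  have hwidth : π / (2 * N) ≤ π := div_le_self pi_pos.le (by linarith)
  calc cos (π / (2 * N)) ≤ cos d := cos_le_cos_of_abs_le (by rwa [mul_comm, ← div_div]) hwidth
    _ ≤ |cos d| := le_abs_self _
    _ = |inner ℝ (measDir N (r + 1)) u| := by
      rw [inner_measDir, hu0, hu1, ← cos_sub, hangle, abs_cos_sub_int_mul_pi, cos_neg]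
end
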